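/- Let m ≥ 0 and let f : ℝ → ℂ be a measurable function such that x ↦ (1+|x|)^{m+1} f(x) is integrable and ∫_ℝ x^j f(x) dx = 0 for all 0 ≤ j ≤ m. Then for every δ > 0 there exists a constant C > 0 such that |C(f)(z)| ≤ C |z|^{−(m+1)} for all z ∈ ℂ with |Im z| ≥ δ. -/

import Mathlib

open MeasureTheory

/-- The Cauchy transform `C(f)(z) = (1/(2πi)) ∫ f(x)/(x−z) dx`. -/
noncomputable def cauchyTransform (f : ℝ → ℂ) (z : ℂ) : ℂ :=
  (1 / (2 * Real.pi * Complex.I)) * ∫ x : ℝ, f x / ((x : ℂ) - z)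

lemma inv_sub_expand (n : ℕ) (x z : ℂ) (hxz : x - z ≠ 0) (hz : z ≠ 0) :
    (x - z)⁻¹ = x ^ n / (z ^ n * (x - z)) - ∑ j ∈ Finset.range n, x ^ j / z ^ (j + 1) := by
  induction n with
  | zero => simp
  | succ n ih =>
    rw [Finset.sum_range_succ]
    have h : x ^ n / (z ^ n * (x - z)) =
        x ^ (n + 1) / (z ^ (n + 1) * (x - z)) - x ^ n / z ^ (n + 1) := by
      field_simp
      ring
    rw [ih, h]
    ring

/-- If `(1+|x|)^{m+1} f(x)` is integrable and the first `m+1` moments of `f` vanish,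
then for every `δ > 0` the Cauchy transform of `f` is `O(|z|^{−(m+1)})` uniformly on
`{|Im z| ≥ δ}`. -/
theorem cauchyTransform_decay
    (m : ℕ) (f : ℝ → ℂ) (hmeas : Measurable f)
    (hint : Integrable fun x : ℝ => (1 + |x|) ^ (m + 1) • f x)
    (hmom : ∀ j ≤ m, ∫ x : ℝ, (x : ℂ) ^ j * f x = 0) :
    ∀ δ : ℝ, 0 < δ → ∃ C : ℝ, 0 < C ∧ ∀ z : ℂ, δ ≤ |z.im| →
      ‖cauchyTransform f z‖ ≤ C / ‖z‖ ^ (m + 1) := by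
  intro δ hδ
  set M : ℝ := ∫ x : ℝ, ‖(1 + |x|) ^ (m + 1) • f x‖ with hM
  have hMnn : 0 ≤ M := integral_nonneg fun x => norm_nonneg _
  have hnorm : ∀ x : ℝ, ‖(1 + |x|) ^ (m + 1) • f x‖ = (1 + |x|) ^ (m + 1) * ‖f x‖ := by
    intro x
    rw [norm_smul, Real.norm_eq_abs, abs_of_nonneg (by positivity)]
  refine ⟨M / (2 * Real.pi * δ) + 1, by positivity, ?_⟩
  intro z hzim
  have hzim0 : z.im ≠ 0 := fun h => by simp [h] at hzim; linarith
  have hz : z ≠ 0 := fun h => hzim0 (by simp [h])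
  have hxz : ∀ x : ℝ, (x : ℂ) - z ≠ 0 := by
    intro x h
    apply hzim0
    have := congrArg Complex.im h
    simpa using this.symm
  have hlb : ∀ x : ℝ, δ ≤ ‖(x : ℂ) - z‖ := by
    intro x
    calc δ ≤ |z.im| := hzim
    _ = |((x : ℂ) - z).im| := by simp
    _ ≤ ‖(x : ℂ) - z‖ := Complex.abs_im_le_norm _
  -- integrability of moments
  have hj_int : ∀ j ≤ m + 1, Integrable fun x : ℝ => (x : ℂ) ^ j * f x := by
    intro j hj
    refine hint.norm.mono' ?_ ?_
    · exact ((Complex.measurable_ofReal.pow_const j).mul hmeas).aestronglyMeasurable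
    · filter_upwards with x
      rw [hnorm x, norm_mul]
      gcongr
      rw [norm_pow, Complex.norm_real, Real.norm_eq_abs]
      calc |x| ^ j ≤ (1 + |x|) ^ j :=
            pow_le_pow_left₀ (abs_nonneg x) (by linarith [abs_nonneg x]) j
      _ ≤ (1 + |x|) ^ (m + 1) :=
            pow_le_pow_right₀ (by linarith [abs_nonneg x]) hj
  have hg_meas : AEStronglyMeasurable (fun x : ℝ => (x : ℂ) ^ (m + 1) * f x / ((x : ℂ) - z)) volume := by
    exact (((Complex.measurable_ofReal.pow_const (m + 1)).mul hmeas).div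
      (Complex.measurable_ofReal.sub_const z)).aestronglyMeasurable
  have hgbound : ∀ x : ℝ, ‖(x : ℂ) ^ (m + 1) * f x / ((x : ℂ) - z)‖ ≤
      δ⁻¹ * ‖(1 + |x|) ^ (m + 1) • f x‖ := by
    intro x
    have hpos : (0 : ℝ) < ‖(x : ℂ) - z‖ := by
      exact lt_of_lt_of_le hδ (hlb x)
    rw [hnorm x, norm_div, norm_mul, norm_pow, Complex.norm_real,
      Real.norm_eq_abs]
    rw [div_le_iff₀ hpos]
    have h1 : |x| ^ (m + 1) * ‖f x‖ ≤ (1 + |x|) ^ (m + 1) * ‖f x‖ := by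
      gcongr
      linarith [abs_nonneg x]
    have h2 : δ ≤ ‖(x : ℂ) - z‖ := by exact hlb x
    calc |x| ^ (m + 1) * ‖f x‖ ≤ (1 + |x|) ^ (m + 1) * ‖f x‖ := h1
    _ = δ⁻¹ * ((1 + |x|) ^ (m + 1) * ‖f x‖) * δ := by field_simp
    _ ≤ δ⁻¹ * ((1 + |x|) ^ (m + 1) * ‖f x‖) * ‖(x:ℂ) - z‖ :=
        mul_le_mul_of_nonneg_left h2 (by positivity)
  have hg_int : Integrable fun x : ℝ => (x : ℂ) ^ (m + 1) * f x / ((x : ℂ) - z) := by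
    refine (hint.norm.const_mul δ⁻¹).mono' hg_meas ?_
    filter_upwards with x using hgbound x
  -- pointwise expansion
  have hpt : ∀ x : ℝ, f x / ((x : ℂ) - z) =
      (z ^ (m + 1))⁻¹ * ((x : ℂ) ^ (m + 1) * f x / ((x : ℂ) - z)) -
        ∑ j ∈ Finset.range (m + 1), (z ^ (j + 1))⁻¹ * ((x : ℂ) ^ j * f x) := by
    intro x
    rw [div_eq_mul_inv (f x), inv_sub_expand (m + 1) _ _ (hxz x) hz, mul_sub, Finset.mul_sum]
    congr 1
    · rw [div_eq_mul_inv, mul_inv]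
      ring
    · apply Finset.sum_congr rfl
      intro j _
      rw [div_eq_mul_inv]
      ring
  have key : ∫ x : ℝ, f x / ((x : ℂ) - z) =
      (z ^ (m + 1))⁻¹ * ∫ x : ℝ, (x : ℂ) ^ (m + 1) * f x / ((x : ℂ) - z) := by
    rw [integral_congr_ae (Filter.Eventually.of_forall hpt)]
    rw [integral_sub (hg_int.const_mul _)
      (integrable_finset_sum _ fun j hj => ((hj_int j (by
        simp only [Finset.mem_range] at hj; omega)).const_mul _))]
    rw [integral_finset_sum _ fun j hj => ((hj_int j (by
        simp only [Finset.mem_range] at hj; omega)).const_mul _)]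
    rw [integral_const_mul]
    have : ∀ j ∈ Finset.range (m + 1),
        ∫ x : ℝ, (z ^ (j + 1))⁻¹ * ((x : ℂ) ^ j * f x) = 0 := by
      intro j hj
      rw [integral_const_mul, hmom j (by simpa [Nat.lt_succ_iff] using hj), mul_zero]
    rw [Finset.sum_congr rfl this, Finset.sum_const_zero, sub_zero]
  -- bound on the remainder integral
  have hIbound : ‖∫ x : ℝ, (x : ℂ) ^ (m + 1) * f x / ((x : ℂ) - z)‖ ≤ δ⁻¹ * M := by
    calc ‖∫ x : ℝ, (x : ℂ) ^ (m + 1) * f x / ((x : ℂ) - z)‖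
        ≤ ∫ x : ℝ, δ⁻¹ * ‖(1 + |x|) ^ (m + 1) • f x‖ :=
          norm_integral_le_of_norm_le (hint.norm.const_mul δ⁻¹)
            (Filter.Eventually.of_forall hgbound)
    _ = δ⁻¹ * M := by rw [integral_const_mul]
  have hzabs : 0 < ‖z‖ := by
    simpa [norm_pos_iff] using hz
  have habs : ‖cauchyTransform f z‖ =
      (1 / (2 * Real.pi)) * (‖z‖ ^ (m + 1))⁻¹ *
        ‖∫ x : ℝ, (x : ℂ) ^ (m + 1) * f x / ((x : ℂ) - z)‖ := by
    rw [cauchyTransform, key, norm_mul, norm_mul, norm_inv, norm_pow]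
    have : ‖(1 / (2 * Real.pi * Complex.I))‖ = 1 / (2 * Real.pi) := by
      simp [abs_of_nonneg Real.pi_pos.le]
    rw [this]
    ring
  have hπ := Real.pi_pos
  have h3 : 1 / (2 * Real.pi) * ‖∫ x : ℝ, (x : ℂ) ^ (m + 1) * f x / ((x : ℂ) - z)‖ ≤
      M / (2 * Real.pi * δ) + 1 := by
    calc 1 / (2 * Real.pi) * ‖∫ x : ℝ, (x : ℂ) ^ (m + 1) * f x / ((x : ℂ) - z)‖
        ≤ 1 / (2 * Real.pi) * (δ⁻¹ * M) := by gcongr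
    _ = M / (2 * Real.pi * δ) := by
        field_simp
    _ ≤ M / (2 * Real.pi * δ) + 1 := by linarith
  rw [habs, div_eq_mul_inv]
  calc 1 / (2 * Real.pi) * (‖z‖ ^ (m + 1))⁻¹ *
        ‖∫ x : ℝ, (x : ℂ) ^ (m + 1) * f x / ((x : ℂ) - z)‖
      = (1 / (2 * Real.pi) * ‖∫ x : ℝ, (x : ℂ) ^ (m + 1) * f x / ((x : ℂ) - z)‖) *
        (‖z‖ ^ (m + 1))⁻¹ := by ring
  _ ≤ (M / (2 * Real.pi * δ) + 1) * (‖z‖ ^ (m + 1))⁻¹ := by gcongr
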